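/- Suppose L is a regular tree language and t is a binary term such that t(t(*,*),*) is L-equivalent to t(*,t(*,*)). Let Γ be the arity-0 letters of the alphabet. Then there exists a regular word language K ⊆ Γ* such that for every n ≥ 2, all a1,…,an ∈ Γ, and every n-ary term s ∈ t*, the word a1⋯an belongs to K if and only if the tree s(a1,…,an) belongs to L. -/

import Mathlib

inductive Term (σ : Type) : Type
  | port : Term σ
  | node : σ → List (Term σ) → Term σ

namespace Term

variable {σ : Type}

def ports : Term σ → ℕ
  | .port => 1
  | .node _ ts => (ts.attach.map fun x => ports x.1).sum
decreasing_by
  simp_wf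
  have := List.sizeOf_lt_of_mem x.2
  omega

def size : Term σ → ℕ
  | .port => 1
  | .node _ ts => 1 + (ts.attach.map fun x => size x.1).sum
decreasing_by
  simp_wf
  have := List.sizeOf_lt_of_mem x.2
  omega

def WF (ar : σ → ℕ) : Term σ → Prop
  | .port => True
  | .node a ts => ts.length = ar a ∧ ∀ t ∈ ts.attach, WF ar t.1
decreasing_by
  simp_wf
  have := List.sizeOf_lt_of_mem t.2
  omega

mutual
def subst1 : Term σ → List (Term σ) → Term σ × List (Term σ)
  | .port, l => (l.headD .port, l.tail)
  | .node a ts, l => let p := substL ts l; (.node a p.1, p.2)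
def substL : List (Term σ) → List (Term σ) → List (Term σ) × List (Term σ)
  | [], l => ([], l)
  | t :: ts, l => let p := subst1 t l; let q := substL ts p.2; (p.1 :: q.1, q.2)
end

/-- Substitute the terms `l` for the ports of `t`, in left-to-right order. -/
def subst (t : Term σ) (l : List (Term σ)) : Term σ := (subst1 t l).1

def eval {Q : Type} (δ : σ → List Q → Q) (q0 : Q) : Term σ → Q
  | .port => q0
  | .node a ts => δ a (ts.attach.map fun x => eval δ q0 x.1)
decreasing_by
  simp_wf
  have := List.sizeOf_lt_of_mem x.2
  omega

end Term

inductive TStar {σ : Type} (t : Term σ) : Term σ → Prop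
  | base : TStar t Term.port
  | step {u v : Term σ} : TStar t u → TStar t v → TStar t (t.subst [u, v])

def LEquiv {σ : Type} (ar : σ → ℕ) (L : Set (Term σ)) (n : ℕ) (u u' : Term σ) : Prop :=
  u.ports = n ∧ u'.ports = n ∧
  ∀ s : Term σ, s.ports = 1 → s.WF ar →
    ∀ l : List (Term σ), l.length = n → (∀ x ∈ l, x.ports = 0 ∧ x.WF ar) →
      (s.subst [u.subst l] ∈ L ↔ s.subst [u'.subst l] ∈ L)

def RegularTree {σ : Type} (ar : σ → ℕ) (L : Set (Term σ)) : Prop :=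
  ∃ (Q : Type) (_ : Finite Q) (δ : σ → List Q → Q) (q0 : Q) (F : Set Q),
    L = {u | u.ports = 0 ∧ u.WF ar ∧ u.eval δ q0 ∈ F}

def RegularWord {Γ : Type} (K : Set (List Γ)) : Prop :=
  ∃ (Q : Type) (_ : Fintype Q) (M : DFA Γ Q), K = M.accepts


/-! Run the automaton of `L` on terms whose ports are fed states. Call two states equivalent when
no unary context separates them. Acting on states of trees, `t` induces a binary operation that
respects this equivalence, and the rotation hypothesis says precisely that the operation is
associative up to it. So by induction on `s ∈ t*`, the state of `s(a₁, …, aₙ)` is equivalent to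
that of the left comb `t(…t(t(a₁, a₂), a₃)…, aₙ)`, which a word automaton computes letter by
letter. -/

namespace Term

variable {σ : Type}

theorem ports_port : (port : Term σ).ports = 1 := by
  rw [ports]

theorem ports_node (a : σ) (ts : List (Term σ)) : (node a ts).ports = (ts.map ports).sum := by
  rw [ports, List.attach_map_val]

theorem wf_port {ar : σ → ℕ} : (port : Term σ).WF ar := by
  rw [WF]; trivial

theorem wf_node {ar : σ → ℕ} {a : σ} {ts : List (Term σ)} :
    (node a ts).WF ar ↔ ts.length = ar a ∧ ∀ t ∈ ts, t.WF ar := by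
  rw [WF]; simp

theorem eval_node {Q : Type} (δ : σ → List Q → Q) (q0 : Q) (a : σ) (ts : List (Term σ)) :
    (node a ts).eval δ q0 = δ a (ts.map (eval δ q0)) := by
  rw [eval, List.attach_map_val]

/-- The trees of the paper: well-formed terms without ports. -/
def IsTree (ar : σ → ℕ) (x : Term σ) : Prop := x.ports = 0 ∧ x.WF ar

mutual
theorem subst1_snd : ∀ (t : Term σ) (l : List (Term σ)), (subst1 t l).2 = l.drop t.ports
  | .port, l => by rw [subst1, ports_port, List.drop_one]
  | .node a ts, l => by rw [subst1, ports_node]; exact substL_snd ts l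
theorem substL_snd : ∀ (ts l : List (Term σ)), (substL ts l).2 = l.drop (ts.map ports).sum
  | [], l => rfl
  | t :: ts, l => by
      rw [substL, substL_snd ts, subst1_snd t, List.drop_drop, List.map_cons, List.sum_cons,
        Nat.add_comm]
end

mutual
theorem ports_subst1 : ∀ (t : Term σ) (l : List (Term σ)), t.ports ≤ l.length →
    (subst1 t l).1.ports = ((l.take t.ports).map ports).sum
  | .port, [], h => by simp [ports_port] at h
  | .port, x :: l, _ => by simp [subst1, ports_port]
  | .node a ts, l, h => by
      rw [ports_node] at h
      rw [subst1, ports_node, ports_node]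
      exact ports_substL ts l h
theorem ports_substL : ∀ (ts l : List (Term σ)), (ts.map ports).sum ≤ l.length →
    ((substL ts l).1.map ports).sum = ((l.take (ts.map ports).sum).map ports).sum
  | [], l, _ => by simp [substL]
  | t :: ts, l, h => by
      rw [List.map_cons, List.sum_cons] at h ⊢
      rw [substL, List.map_cons, List.sum_cons, ports_subst1 t l (by omega),
        ports_substL ts _ (by rw [subst1_snd, List.length_drop]; omega), subst1_snd, List.take_add,
        List.map_append, List.sum_append]
end

theorem ports_subst {t : Term σ} {l : List (Term σ)} (h : t.ports = l.length) :
    (t.subst l).ports = (l.map ports).sum := by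
  rw [subst, ports_subst1 t l h.le, List.take_of_length_le h.ge]

theorem substL_fst_length : ∀ (ts l : List (Term σ)), (substL ts l).1.length = ts.length
  | [], l => rfl
  | t :: ts, l => by rw [substL]; simp [substL_fst_length ts]

mutual
theorem wf_subst1 {ar : σ → ℕ} : ∀ (t : Term σ) (l : List (Term σ)), t.WF ar →
    (∀ x ∈ l, x.WF ar) → (subst1 t l).1.WF ar
  | .port, [], _, _ => wf_port
  | .port, x :: l, _, hl => hl x List.mem_cons_self
  | .node a ts, l, ht, hl => by
      rw [wf_node] at ht
      rw [subst1, wf_node, substL_fst_length]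
      exact ⟨ht.1, wf_substL ts l ht.2 hl⟩
theorem wf_substL {ar : σ → ℕ} : ∀ (ts l : List (Term σ)), (∀ x ∈ ts, x.WF ar) →
    (∀ x ∈ l, x.WF ar) → ∀ x ∈ (substL ts l).1, x.WF ar
  | [], l, _, _ => by simp [substL]
  | t :: ts, l, hts, hl => by
      rw [substL]
      rintro x (_ | ⟨_, hx⟩)
      · exact wf_subst1 t l (hts t List.mem_cons_self) hl
      · refine wf_substL ts _ (fun y hy => hts y (List.mem_cons_of_mem _ hy)) ?_ x hx
        rw [subst1_snd]
        exact fun y hy => hl y (List.mem_of_mem_drop hy)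
end

theorem wf_subst {ar : σ → ℕ} {t : Term σ} {l : List (Term σ)} (ht : t.WF ar)
    (hl : ∀ x ∈ l, x.WF ar) : (t.subst l).WF ar :=
  wf_subst1 t l ht hl

theorem isTree_subst {ar : σ → ℕ} {t : Term σ} {l : List (Term σ)} (ht : t.WF ar)
    (hlen : t.ports = l.length) (hl : ∀ x ∈ l, x.IsTree ar) : (t.subst l).IsTree ar := by
  refine ⟨?_, wf_subst ht fun x hx => (hl x hx).2⟩
  rw [ports_subst hlen, List.sum_eq_zero]
  simp only [List.mem_map]
  rintro _ ⟨x, hx, rfl⟩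
  exact (hl x hx).1

section evalPorts

variable {Q : Type} (δ : σ → List Q → Q) (q0 : Q)

/- `evalPorts δ q0 t qs` runs the automaton on `t` with its ports reading, from left to right,
the states `qs`; it returns the resulting state together with the unread states. A missing
state reads as `q0`. -/
mutual
def evalPorts : Term σ → List Q → Q × List Q
  | .port, qs => (qs.headD q0, qs.tail)
  | .node a ts, qs => let p := evalPortsL ts qs; (δ a p.1, p.2)
def evalPortsL : List (Term σ) → List Q → List Q × List Q
  | [], qs => ([], qs)
  | t :: ts, qs => let p := evalPorts t qs; let q := evalPortsL ts p.2; (p.1 :: q.1, q.2)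
end

variable {δ q0}

@[simp]
theorem evalPorts_port (q : Q) (qs : List Q) : evalPorts δ q0 port (q :: qs) = (q, qs) := by
  rw [evalPorts]; rfl

mutual
theorem evalPorts_nil : ∀ t : Term σ, evalPorts δ q0 t [] = (t.eval δ q0, [])
  | .port => by rw [evalPorts, eval]; rfl
  | .node a ts => by rw [evalPorts, evalPortsL_nil ts, eval_node]
theorem evalPortsL_nil : ∀ ts : List (Term σ), evalPortsL δ q0 ts [] = (ts.map (eval δ q0), [])
  | [] => rfl
  | t :: ts => by rw [evalPortsL, evalPorts_nil t, evalPortsL_nil ts, List.map_cons]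
end

mutual
theorem evalPorts_snd : ∀ (t : Term σ) (qs : List Q), (evalPorts δ q0 t qs).2 = qs.drop t.ports
  | .port, qs => by rw [evalPorts, ports_port, List.drop_one]
  | .node a ts, qs => by rw [evalPorts, ports_node]; exact evalPortsL_snd ts qs
theorem evalPortsL_snd : ∀ (ts : List (Term σ)) (qs : List Q),
    (evalPortsL δ q0 ts qs).2 = qs.drop (ts.map ports).sum
  | [], qs => rfl
  | t :: ts, qs => by
      rw [evalPortsL, evalPortsL_snd ts, evalPorts_snd t, List.drop_drop, List.map_cons,
        List.sum_cons, Nat.add_comm]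
end

mutual
theorem evalPorts_append : ∀ (t : Term σ) (qs rs : List Q), t.ports ≤ qs.length →
    evalPorts δ q0 t (qs ++ rs) = ((evalPorts δ q0 t qs).1, (evalPorts δ q0 t qs).2 ++ rs)
  | .port, [], _, h => by simp [ports_port] at h
  | .port, q :: qs, rs, _ => by simp [evalPorts]
  | .node a ts, qs, rs, h => by
      rw [ports_node] at h
      rw [evalPorts, evalPorts, evalPortsL_append ts qs rs h]
theorem evalPortsL_append : ∀ (ts : List (Term σ)) (qs rs : List Q),
    (ts.map ports).sum ≤ qs.length →
    evalPortsL δ q0 ts (qs ++ rs) = ((evalPortsL δ q0 ts qs).1, (evalPortsL δ q0 ts qs).2 ++ rs)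
  | [], qs, rs, _ => rfl
  | t :: ts, qs, rs, h => by
      rw [List.map_cons, List.sum_cons] at h
      rw [evalPortsL, evalPortsL, evalPorts_append t qs rs (by omega),
        evalPortsL_append ts _ rs (by rw [evalPorts_snd, List.length_drop]; omega)]
end

/- Running `t[l]` on `qs` is running `t` on the results of running the terms of `l` one after
the other on `qs`. The terms of `l` beyond the ports of `t` are left over by `subst1`; their
results are what `t` leaves unread. -/
mutual
theorem evalPorts_subst1 : ∀ (t : Term σ) (l : List (Term σ)) (qs : List Q), t.ports ≤ l.length →
    evalPorts δ q0 t (evalPortsL δ q0 l qs).1 =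
      ((evalPorts δ q0 (subst1 t l).1 qs).1,
        (evalPortsL δ q0 (subst1 t l).2 (evalPorts δ q0 (subst1 t l).1 qs).2).1)
  | .port, [], _, h => by simp [ports_port] at h
  | .port, x :: l, qs, _ => by simp [evalPorts, evalPortsL, subst1]
  | .node a ts, l, qs, h => by
      rw [ports_node] at h
      rw [evalPorts, evalPortsL_substL ts l qs h, subst1, evalPorts]
theorem evalPortsL_substL : ∀ (ts l : List (Term σ)) (qs : List Q),
    (ts.map ports).sum ≤ l.length →
    evalPortsL δ q0 ts (evalPortsL δ q0 l qs).1 =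
      ((evalPortsL δ q0 (substL ts l).1 qs).1,
        (evalPortsL δ q0 (substL ts l).2 (evalPortsL δ q0 (substL ts l).1 qs).2).1)
  | [], l, qs, _ => by simp [evalPortsL, substL]
  | t :: ts, l, qs, h => by
      rw [List.map_cons, List.sum_cons] at h
      rw [evalPortsL, evalPorts_subst1 t l qs (by omega),
        evalPortsL_substL ts _ _ (by rw [subst1_snd, List.length_drop]; omega), substL,
        evalPortsL]
end

theorem evalPorts_subst {t : Term σ} {l : List (Term σ)} (h : t.ports ≤ l.length)
    (qs : List Q) :
    (evalPorts δ q0 (t.subst l) qs).1 = (evalPorts δ q0 t (evalPortsL δ q0 l qs).1).1 := by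
  rw [subst, evalPorts_subst1 t l qs h]

theorem eval_subst {t : Term σ} {l : List (Term σ)} (h : t.ports ≤ l.length) :
    (t.subst l).eval δ q0 = (evalPorts δ q0 t (l.map (eval δ q0))).1 := by
  simpa only [evalPorts_nil, evalPortsL_nil] using evalPorts_subst (δ := δ) (q0 := q0) h []

theorem evalPorts_append_of_length_eq {t : Term σ} {qs : List Q} (h : qs.length = t.ports)
    (rs : List Q) : evalPorts δ q0 t (qs ++ rs) = ((evalPorts δ q0 t qs).1, rs) := by
  rw [evalPorts_append t qs rs h.ge, evalPorts_snd, List.drop_of_length_le h.le, List.nil_append]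

end evalPorts

end Term

section TStar

open Term

variable {σ : Type} {t : Term σ}

theorem TStar.wf {ar : σ → ℕ} (hwf : t.WF ar) {s : Term σ} (hs : TStar t s) : s.WF ar := by
  induction hs with
  | base => exact wf_port
  | step _ _ ihu ihv => exact wf_subst hwf (by simp [ihu, ihv])

theorem TStar.one_le_ports (ht : t.ports = 2) {s : Term σ} (hs : TStar t s) : 1 ≤ s.ports := by
  induction hs with
  | base => rw [ports_port]
  | step _ _ ihu ihv =>
      rw [ports_subst (by simp [ht])]
      simp only [List.map_cons, List.map_nil, List.sum_cons, List.sum_nil]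
      omega

end TStar

section Automaton

open Term

variable {σ Q : Type} (ar : σ → ℕ) (δ : σ → List Q → Q) (q0 : Q) (F : Set Q)

def reachable : Set Q := eval δ q0 '' {x | x.IsTree ar}

/- On reachable states, the Myhill–Nerode congruence of the language recognized with final
states `F`. -/
def CtxEquiv (q q' : Q) : Prop :=
  ∀ c : Term σ, c.ports = 1 → c.WF ar →
    ((c.evalPorts δ q0 [q]).1 ∈ F ↔ (c.evalPorts δ q0 [q']).1 ∈ F)

def binOp (t : Term σ) (a b : Q) : Q := (t.evalPorts δ q0 [a, b]).1

def BinOpAssoc (t : Term σ) : Prop :=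
  ∀ a ∈ reachable ar δ q0, ∀ b ∈ reachable ar δ q0, ∀ c ∈ reachable ar δ q0,
    CtxEquiv ar δ q0 F (binOp δ q0 t (binOp δ q0 t a b) c) (binOp δ q0 t a (binOp δ q0 t b c))

variable {ar δ q0 F} {t : Term σ}

theorem ctxEquiv_equivalence : Equivalence (CtxEquiv ar δ q0 F) where
  refl _ _ _ _ := Iff.rfl
  symm h c hc hcwf := (h c hc hcwf).symm
  trans h h' c hc hcwf := (h c hc hcwf).trans (h' c hc hcwf)

theorem CtxEquiv.mem_iff {q q' : Q} (h : CtxEquiv ar δ q0 F q q') : q ∈ F ↔ q' ∈ F := by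
  simpa using h port ports_port wf_port

theorem exists_trees_of_forall_mem_reachable :
    ∀ {qs : List Q}, (∀ q ∈ qs, q ∈ reachable ar δ q0) →
      ∃ xs : List (Term σ), (∀ x ∈ xs, x.IsTree ar) ∧ xs.map (eval δ q0) = qs
  | [], _ => ⟨[], by simp, rfl⟩
  | q :: qs, h => by
      obtain ⟨x, hx, rfl⟩ := h q List.mem_cons_self
      obtain ⟨xs, hxs, rfl⟩ :=
        exists_trees_of_forall_mem_reachable fun q hq => h q (List.mem_cons_of_mem _ hq)
      exact ⟨x :: xs, by simpa using ⟨hx, hxs⟩, rfl⟩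

theorem evalPorts_mem_reachable {s : Term σ} (hs : s.WF ar) {qs : List Q}
    (hlen : qs.length = s.ports) (hqs : ∀ q ∈ qs, q ∈ reachable ar δ q0) :
    (s.evalPorts δ q0 qs).1 ∈ reachable ar δ q0 := by
  obtain ⟨xs, hxs, rfl⟩ := exists_trees_of_forall_mem_reachable hqs
  rw [List.length_map] at hlen
  exact ⟨s.subst xs, isTree_subst hs hlen.symm hxs, eval_subst hlen.ge⟩

theorem Term.subst_mem_iff {s : Term σ} (hs : s.WF ar) {l : List (Term σ)}
    (hlen : s.ports = l.length) (hl : ∀ x ∈ l, x.IsTree ar) :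
    s.subst l ∈ {u : Term σ | u.ports = 0 ∧ u.WF ar ∧ u.eval δ q0 ∈ F} ↔
      (s.evalPorts δ q0 (l.map (eval δ q0))).1 ∈ F := by
  obtain ⟨h0, hwf⟩ := isTree_subst hs hlen hl
  show _ ∧ _ ∧ _ ↔ _
  rw [eval_subst hlen.le]
  exact ⟨fun h => h.2.2, fun h => ⟨h0, hwf, h⟩⟩

theorem CtxEquiv.evalPorts_unary {d : Term σ} (hd : d.ports = 1) (hdwf : d.WF ar) {q q' : Q}
    (h : CtxEquiv ar δ q0 F q q') :
    CtxEquiv ar δ q0 F (d.evalPorts δ q0 [q]).1 (d.evalPorts δ q0 [q']).1 := by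
  intro c hc hcwf
  have hcd := h (c.subst [d]) (by rw [ports_subst (by simp [hc])]; simp [hd])
    (wf_subst hcwf (by simp [hdwf]))
  simpa only [evalPorts_subst (by simp [hc] : c.ports ≤ [d].length), evalPortsL] using hcd

theorem evalPorts_subst_pair (ht : t.ports = 2) {u v : Term σ} {qs : List Q}
    (hqs : qs.length = u.ports) (rs : List Q) :
    ((t.subst [u, v]).evalPorts δ q0 (qs ++ rs)).1 =
      binOp δ q0 t (u.evalPorts δ q0 qs).1 (v.evalPorts δ q0 rs).1 := by
  rw [evalPorts_subst (by simp [ht])]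
  simp [evalPortsL, evalPorts_append_of_length_eq hqs, binOp]

/- Reachability of the fixed argument provides a tree `y` in its place, so that `t(□, y)` is a
unary context. -/
theorem CtxEquiv.binOp_left (ht : t.ports = 2) (hwf : t.WF ar) {b : Q}
    (hb : b ∈ reachable ar δ q0) {a a' : Q} (h : CtxEquiv ar δ q0 F a a') :
    CtxEquiv ar δ q0 F (binOp δ q0 t a b) (binOp δ q0 t a' b) := by
  obtain ⟨y, ⟨hy0, hywf⟩, rfl⟩ := hb
  have key : ∀ q, binOp δ q0 t q (y.eval δ q0) = ((t.subst [port, y]).evalPorts δ q0 [q]).1 := by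
    intro q
    rw [← List.append_nil [q], evalPorts_subst_pair ht (by simp [ports_port]), evalPorts_nil]
    simp
  rw [key, key]
  exact h.evalPorts_unary (by rw [ports_subst (by simp [ht])]; simp [ports_port, hy0])
    (wf_subst hwf (by simp [wf_port, hywf]))

theorem CtxEquiv.binOp_right (ht : t.ports = 2) (hwf : t.WF ar) {a : Q}
    (ha : a ∈ reachable ar δ q0) {b b' : Q} (h : CtxEquiv ar δ q0 F b b') :
    CtxEquiv ar δ q0 F (binOp δ q0 t a b) (binOp δ q0 t a b') := by
  obtain ⟨x, ⟨hx0, hxwf⟩, rfl⟩ := ha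
  have key : ∀ q, binOp δ q0 t (x.eval δ q0) q = ((t.subst [x, port]).evalPorts δ q0 [q]).1 := by
    intro q
    rw [← List.nil_append [q], evalPorts_subst_pair ht (by simp [hx0]), evalPorts_nil]
    simp
  rw [key, key]
  exact h.evalPorts_unary (by rw [ports_subst (by simp [ht])]; simp [ports_port, hx0])
    (wf_subst hwf (by simp [wf_port, hxwf]))

theorem binOp_mem_reachable (ht : t.ports = 2) (hwf : t.WF ar) {a b : Q}
    (ha : a ∈ reachable ar δ q0) (hb : b ∈ reachable ar δ q0) :
    binOp δ q0 t a b ∈ reachable ar δ q0 :=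
  evalPorts_mem_reachable hwf (by simp [ht]) (by simp [ha, hb])

theorem foldl_binOp_mem_reachable (ht : t.ports = 2) (hwf : t.WF ar) :
    ∀ {a : Q} {l : List Q}, a ∈ reachable ar δ q0 → (∀ q ∈ l, q ∈ reachable ar δ q0) →
      l.foldl (binOp δ q0 t) a ∈ reachable ar δ q0
  | _, [], ha, _ => ha
  | _, _ :: _, ha, hl => by
      obtain ⟨hb, hl⟩ := List.forall_mem_cons.1 hl
      rw [List.foldl_cons]
      exact foldl_binOp_mem_reachable ht hwf (binOp_mem_reachable ht hwf ha hb) hl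

theorem CtxEquiv.foldl_binOp (ht : t.ports = 2) (hwf : t.WF ar) :
    ∀ {l : List Q}, (∀ q ∈ l, q ∈ reachable ar δ q0) → ∀ {a a' : Q},
      CtxEquiv ar δ q0 F a a' →
        CtxEquiv ar δ q0 F (l.foldl (binOp δ q0 t) a) (l.foldl (binOp δ q0 t) a')
  | [], _, _, _, h => h
  | _ :: _, hl, _, _, h => by
      obtain ⟨hb, hl⟩ := List.forall_mem_cons.1 hl
      rw [List.foldl_cons, List.foldl_cons]
      exact CtxEquiv.foldl_binOp ht hwf hl (h.binOp_left ht hwf hb)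

theorem ctxEquiv_binOp_foldl (ht : t.ports = 2) (hwf : t.WF ar)
    (hassoc : BinOpAssoc ar δ q0 F t) :
    ∀ {l : List Q} {a b : Q}, (∀ q ∈ l, q ∈ reachable ar δ q0) → a ∈ reachable ar δ q0 →
      b ∈ reachable ar δ q0 →
        CtxEquiv ar δ q0 F (binOp δ q0 t a (l.foldl (binOp δ q0 t) b))
          (l.foldl (binOp δ q0 t) (binOp δ q0 t a b))
  | [], _, _, _, _, _ => ctxEquiv_equivalence.refl _
  | _ :: _, _, _, hl, ha, hb => by
      obtain ⟨hc, hl⟩ := List.forall_mem_cons.1 hl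
      rw [List.foldl_cons, List.foldl_cons]
      exact ctxEquiv_equivalence.trans
        (ctxEquiv_binOp_foldl ht hwf hassoc hl ha (binOp_mem_reachable ht hwf hb hc))
        (CtxEquiv.foldl_binOp ht hwf hl (ctxEquiv_equivalence.symm (hassoc _ ha _ hb _ hc)))

theorem List.exists_eq_append_cons_of_length_eq {α : Type*} {l : List α} {m n : ℕ}
    (hl : l.length + 1 = m + n) (hm : 1 ≤ m) (hn : 1 ≤ n) :
    ∃ l₁ b l₂, l = l₁ ++ b :: l₂ ∧ l₁.length + 1 = m ∧ l₂.length + 1 = n := by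
  obtain ⟨b, l₂, h⟩ := List.exists_cons_of_length_pos (l := l.drop (m - 1)) (by simp; omega)
  refine ⟨l.take (m - 1), b, l₂, by rw [← h, List.take_append_drop], by simp; omega, ?_⟩
  have := congrArg List.length h
  simp only [List.length_drop, List.length_cons] at this
  omega

theorem ctxEquiv_evalPorts_foldl_of_tStar (ht : t.ports = 2) (hwf : t.WF ar)
    (hassoc : BinOpAssoc ar δ q0 F t) {s : Term σ} (hs : TStar t s) :
    ∀ {a : Q} {rest : List Q}, rest.length + 1 = s.ports → a ∈ reachable ar δ q0 →
      (∀ q ∈ rest, q ∈ reachable ar δ q0) →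
        CtxEquiv ar δ q0 F (s.evalPorts δ q0 (a :: rest)).1 (rest.foldl (binOp δ q0 t) a) := by
  induction hs with
  | base =>
      intro a rest hlen _ _
      obtain rfl : rest = [] := List.eq_nil_of_length_eq_zero (by rw [ports_port] at hlen; omega)
      simpa using ctxEquiv_equivalence.refl a
  | @step u v hu hv ihu ihv =>
      intro a rest hlen ha hrest
      rw [ports_subst (by simp [ht])] at hlen
      simp only [List.map_cons, List.map_nil, List.sum_cons, List.sum_nil, add_zero] at hlen
      obtain ⟨r₁, b, r₂, rfl, hr₁, hr₂⟩ :=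
        List.exists_eq_append_cons_of_length_eq hlen (hu.one_le_ports ht) (hv.one_le_ports ht)
      obtain ⟨hr₁R, hb, hr₂R⟩ : (∀ q ∈ r₁, q ∈ reachable ar δ q0) ∧ b ∈ reachable ar δ q0 ∧
          ∀ q ∈ r₂, q ∈ reachable ar δ q0 := by
        simpa only [List.forall_mem_append, List.forall_mem_cons] using hrest
      have hfold := foldl_binOp_mem_reachable ht hwf ha hr₁R
      have hv_mem := evalPorts_mem_reachable (hv.wf hwf) (qs := b :: r₂) hr₂
        (List.forall_mem_cons.2 ⟨hb, hr₂R⟩)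
      rw [← List.cons_append, evalPorts_subst_pair ht (qs := a :: r₁) hr₁, List.foldl_append,
        List.foldl_cons]
      exact ctxEquiv_equivalence.trans ((ihu hr₁ ha hr₁R).binOp_left ht hwf hv_mem) <|
        ctxEquiv_equivalence.trans ((ihv hr₂ hb hr₂R).binOp_right ht hwf hfold) <|
          ctxEquiv_binOp_foldl ht hwf hassoc hr₂R hfold hb

theorem LEquiv.ctxEquiv_evalPorts {n : ℕ} {u u' : Term σ}
    (h : LEquiv ar {x | x.ports = 0 ∧ x.WF ar ∧ x.eval δ q0 ∈ F} n u u') (hu : u.WF ar)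
    (hu' : u'.WF ar) {qs : List Q} (hlen : qs.length = n)
    (hqs : ∀ q ∈ qs, q ∈ reachable ar δ q0) :
    CtxEquiv ar δ q0 F (u.evalPorts δ q0 qs).1 (u'.evalPorts δ q0 qs).1 := by
  obtain ⟨xs, hxs, rfl⟩ := exists_trees_of_forall_mem_reachable hqs
  obtain ⟨hun, hun', hL⟩ := h
  rw [List.length_map] at hlen
  intro c hc hcwf
  have hW := isTree_subst hu (hun.trans hlen.symm) hxs
  have hW' := isTree_subst hu' (hun'.trans hlen.symm) hxs
  have hctx := hL c hc hcwf xs hlen hxs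
  rwa [Term.subst_mem_iff hcwf (by simp [hc]) (by simpa using hW),
    Term.subst_mem_iff hcwf (by simp [hc]) (by simpa using hW'), List.map_singleton,
    List.map_singleton, eval_subst (hun.trans hlen.symm).le,
    eval_subst (hun'.trans hlen.symm).le] at hctx

theorem binOpAssoc_of_lEquiv (ht : t.ports = 2) (hwf : t.WF ar)
    (hrot : LEquiv ar {x | x.ports = 0 ∧ x.WF ar ∧ x.eval δ q0 ∈ F} 3
      (t.subst [t, port]) (t.subst [port, t])) :
    BinOpAssoc ar δ q0 F t := by
  intro a ha b hb c hc
  have h := hrot.ctxEquiv_evalPorts (wf_subst hwf (by simp [hwf, wf_port]))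
    (wf_subst hwf (by simp [hwf, wf_port])) (qs := [a, b, c]) rfl (by simp [ha, hb, hc])
  have hleft : ((t.subst [t, port]).evalPorts δ q0 ([a, b] ++ [c])).1 =
      binOp δ q0 t (binOp δ q0 t a b) c := by
    rw [evalPorts_subst_pair ht (by simp [ht]), evalPorts_port]; rfl
  have hright : ((t.subst [port, t]).evalPorts δ q0 ([a] ++ [b, c])).1 =
      binOp δ q0 t a (binOp δ q0 t b c) := by
    rw [evalPorts_subst_pair ht (by simp [ports_port]), evalPorts_port]; rfl
  rwa [← hleft, ← hright]

end Automaton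

theorem exists_regularWord_foldl {Γ Q : Type} [Finite Q] (start : Γ → Q) (step : Q → Γ → Q)
    (F : Set Q) :
    ∃ K : Set (List Γ), RegularWord K ∧ ∀ a w, a :: w ∈ K ↔ w.foldl step (start a) ∈ F := by
  have := Fintype.ofFinite Q
  -- `none` is the state before the first letter, which seeds the fold.
  let M : DFA Γ (Option Q) := ⟨fun o a => some (o.elim (start a) (step · a)), none, some '' F⟩
  refine ⟨M.accepts, ⟨_, inferInstance, M, rfl⟩, fun a w => ?_⟩
  have hrun : M.eval (a :: w) = some (w.foldl step (start a)) :=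
    List.foldl_hom some fun _ _ => rfl
  change M.eval (a :: w) ∈ some '' F ↔ _
  rw [hrun]
  exact (Option.some_injective _).mem_set_image

/-- Corollary of the Rotation Lemma: if `L` is regular and `t(t(*,*),*)` is
`L`-equivalent to `t(*,t(*,*))`, then there is a regular word language `K` over the
arity-0 letters such that `a₁⋯aₙ ∈ K` iff `s(a₁,…,aₙ) ∈ L`, for every `n ≥ 2` and
every `n`-ary `s ∈ t*`. -/
theorem rotation_corollary {σ : Type} (ar : σ → ℕ) (L : Set (Term σ))
    (hL : RegularTree ar L) (t : Term σ) (ht : t.ports = 2) (hwf : t.WF ar)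
    (hrot : LEquiv ar L 3 (t.subst [t, Term.port]) (t.subst [Term.port, t])) :
    ∃ K : Set (List {x : σ // ar x = 0}), RegularWord K ∧
      ∀ n : ℕ, 2 ≤ n → ∀ as : List {x : σ // ar x = 0}, as.length = n →
        ∀ s : Term σ, TStar t s → s.ports = n →
          (as ∈ K ↔ s.subst (as.map fun g => Term.node g.1 []) ∈ L) := by
  obtain ⟨Q, _, δ, q0, F, rfl⟩ := hL
  let leaf : {x : σ // ar x = 0} → Term σ := fun g => Term.node g.1 []
  have hleaf (g : {x : σ // ar x = 0}) : (leaf g).IsTree ar :=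
    ⟨by simp [leaf, Term.ports_node], Term.wf_node.2 ⟨g.2.symm, by simp⟩⟩
  obtain ⟨K, hK, hmem⟩ := exists_regularWord_foldl (fun g => (leaf g).eval δ q0)
    (fun q g => binOp δ q0 t q ((leaf g).eval δ q0)) F
  refine ⟨K, hK, fun n hn as hlen s hs hsn => ?_⟩
  have hleaves : ∀ x ∈ as.map leaf, x.IsTree ar := List.forall_mem_map.2 fun g _ => hleaf g
  obtain ⟨a, w, rfl⟩ := List.exists_cons_of_length_pos (by omega : 0 < as.length)
  rw [hmem, Term.subst_mem_iff (hs.wf hwf) (by simp [hsn, ← hlen]) hleaves, ← List.foldl_map,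
    List.map_map, List.map_cons]
  exact (ctxEquiv_evalPorts_foldl_of_tStar ht hwf (binOpAssoc_of_lEquiv ht hwf hrot) hs
    (rest := w.map _) (by simp [hsn, ← hlen]) ⟨_, hleaf a, rfl⟩
    (List.forall_mem_map.2 fun g _ => ⟨_, hleaf g, rfl⟩)).mem_iff.symm
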